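/- Partial identification: under the marginal sensitivity model with true propensity π(x,y) satisfying Λ⁻¹ ≤ OR(π(x),π(x,y)) ≤ Λ, there exists h with ‖h‖_∞ ≤ log Λ such that μ₁ = μ₁^{(h)}, and consequently inf_{‖h‖_∞ ≤ log Λ} μ₁^{(h)} ≤ μ₁ ≤ sup_{‖h‖_∞ ≤ log Λ} μ₁^{(h)}. -/

import Mathlib

/-! The witness is `h(x, y) = log OR(π(x), π(x, y))`: the sensitivity bounds give `|h| ≤ log Λ`,
and with this `h` the tilted weight `1 + (1/π(x) - 1) e^h` equals `1/π(x, y)`, so `μ₁^{(h)}` is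
the self-normalized IPW expression for `μ₁`. -/

open MeasureTheory

noncomputable def OR (p1 p2 : ℝ) : ℝ := (p1 / (1 - p1)) / (p2 / (1 - p2))

lemma OR_pos {p q : ℝ} (hp : p ∈ Set.Ioo (0 : ℝ) 1) (hq : q ∈ Set.Ioo (0 : ℝ) 1) :
    0 < OR p q :=
  div_pos (div_pos hp.1 (sub_pos.2 hp.2)) (div_pos hq.1 (sub_pos.2 hq.2))

lemma one_add_inv_sub_one_mul_OR {p q : ℝ} (hp₀ : p ≠ 0) (hp₁ : p ≠ 1) (hq₀ : q ≠ 0)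
    (hq₁ : q ≠ 1) : 1 + (1 / p - 1) * OR p q = 1 / q := by
  have hp : 1 - p ≠ 0 := sub_ne_zero.2 hp₁.symm
  have hq : 1 - q ≠ 0 := sub_ne_zero.2 hq₁.symm
  rw [OR]
  field_simp
  ring

lemma Real.abs_log_le_log_of_inv_le_of_le {a Λ : ℝ} (ha : 0 < a) (hlo : Λ⁻¹ ≤ a)
    (hhi : a ≤ Λ) : |Real.log a| ≤ Real.log Λ := by
  have hΛ : 0 < Λ := ha.trans_le hhi
  rw [abs_le, ← Real.log_inv]
  exact ⟨Real.log_le_log (inv_pos.2 hΛ) hlo, Real.log_le_log ha hhi⟩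

theorem partial_identification_general
    {X Ω : Type*} [MeasurableSpace Ω] (μ : Measure Ω)
    (Xf : Ω → X) (Yf : Ω → ℝ) (Zf : Ω → ℝ)
    (π : X → ℝ) (hπ : ∀ x, π x ∈ Set.Ioo (0:ℝ) 1)
    (πxy : X → ℝ → ℝ) (hπxy : ∀ x y, πxy x y ∈ Set.Ioo (0:ℝ) 1)
    (Λ : ℝ)
    (hsens : ∀ x y, Λ⁻¹ ≤ OR (π x) (πxy x y) ∧ OR (π x) (πxy x y) ≤ Λ)
    -- the shifted estimand μ₁^{(h)}
    (μ1h : (X → ℝ → ℝ) → ℝ)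
    (hμ1h : ∀ h : X → ℝ → ℝ,
      μ1h h = (∫ ω, Zf ω * (1 + (1 / π (Xf ω) - 1) * Real.exp (h (Xf ω) (Yf ω))) ∂μ)⁻¹ *
        ∫ ω, Zf ω * Yf ω * (1 + (1 / π (Xf ω) - 1) * Real.exp (h (Xf ω) (Yf ω))) ∂μ)
    (μ1 : ℝ)
    -- the self-normalized IPW identity for the true propensity score
    (hipw : μ1 = (∫ ω, Zf ω / πxy (Xf ω) (Yf ω) ∂μ)⁻¹ * ∫ ω, Zf ω * Yf ω / πxy (Xf ω) (Yf ω) ∂μ)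
    (hbb : BddBelow {m : ℝ | ∃ h : X → ℝ → ℝ, (∀ x y, |h x y| ≤ Real.log Λ) ∧ μ1h h = m})
    (hba : BddAbove {m : ℝ | ∃ h : X → ℝ → ℝ, (∀ x y, |h x y| ≤ Real.log Λ) ∧ μ1h h = m}) :
    (∃ h : X → ℝ → ℝ, (∀ x y, |h x y| ≤ Real.log Λ) ∧ μ1h h = μ1) ∧
    sInf {m : ℝ | ∃ h : X → ℝ → ℝ, (∀ x y, |h x y| ≤ Real.log Λ) ∧ μ1h h = m} ≤ μ1 ∧
    μ1 ≤ sSup {m : ℝ | ∃ h : X → ℝ → ℝ, (∀ x y, |h x y| ≤ Real.log Λ) ∧ μ1h h = m} := by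
  set h : X → ℝ → ℝ := fun x y => Real.log (OR (π x) (πxy x y))
  have hOR_pos : ∀ x y, 0 < OR (π x) (πxy x y) := fun x y => OR_pos (hπ x) (hπxy x y)
  have h_bound : ∀ x y, |h x y| ≤ Real.log Λ := fun x y =>
    Real.abs_log_le_log_of_inv_le_of_le (hOR_pos x y) (hsens x y).1 (hsens x y).2
  have h_weight : ∀ x y, 1 + (1 / π x - 1) * Real.exp (h x y) = 1 / πxy x y := fun x y => by
    rw [Real.exp_log (hOR_pos x y)]
    exact one_add_inv_sub_one_mul_OR (hπ x).1.ne' (hπ x).2.ne (hπxy x y).1.ne' (hπxy x y).2.ne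
  have h_id : μ1h h = μ1 := by
    simp only [hμ1h, hipw, h_weight, mul_one_div]
  exact ⟨⟨h, h_bound, h_id⟩, csInf_le hbb ⟨h, h_bound, h_id⟩, le_csSup hba ⟨h, h_bound, h_id⟩⟩

theorem partial_identification
    {X Ω : Type*} [MeasurableSpace Ω] (μ : Measure Ω) [IsProbabilityMeasure μ]
    (Xf : Ω → X) (Yf : Ω → ℝ) (Zf : Ω → ℝ)
    (π : X → ℝ) (hπ : ∀ x, π x ∈ Set.Ioo (0:ℝ) 1)
    (πxy : X → ℝ → ℝ) (hπxy : ∀ x y, πxy x y ∈ Set.Ioo (0:ℝ) 1)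
    (Λ : ℝ) (hΛ : 1 ≤ Λ)
    (hsens : ∀ x y, Λ⁻¹ ≤ OR (π x) (πxy x y) ∧ OR (π x) (πxy x y) ≤ Λ)
    -- the shifted estimand μ₁^{(h)}
    (μ1h : (X → ℝ → ℝ) → ℝ)
    (hμ1h : ∀ h : X → ℝ → ℝ,
      μ1h h = (∫ ω, Zf ω * (1 + (1 / π (Xf ω) - 1) * Real.exp (h (Xf ω) (Yf ω))) ∂μ)⁻¹ *
        ∫ ω, Zf ω * Yf ω * (1 + (1 / π (Xf ω) - 1) * Real.exp (h (Xf ω) (Yf ω))) ∂μ)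
    (μ1 : ℝ)
    -- the self-normalized IPW identity for the true propensity score
    (hipw : μ1 = (∫ ω, Zf ω / πxy (Xf ω) (Yf ω) ∂μ)⁻¹ * ∫ ω, Zf ω * Yf ω / πxy (Xf ω) (Yf ω) ∂μ)
    (hbb : BddBelow {m : ℝ | ∃ h : X → ℝ → ℝ, (∀ x y, |h x y| ≤ Real.log Λ) ∧ μ1h h = m})
    (hba : BddAbove {m : ℝ | ∃ h : X → ℝ → ℝ, (∀ x y, |h x y| ≤ Real.log Λ) ∧ μ1h h = m}) :
    (∃ h : X → ℝ → ℝ, (∀ x y, |h x y| ≤ Real.log Λ) ∧ μ1h h = μ1) ∧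
    sInf {m : ℝ | ∃ h : X → ℝ → ℝ, (∀ x y, |h x y| ≤ Real.log Λ) ∧ μ1h h = m} ≤ μ1 ∧
    μ1 ≤ sSup {m : ℝ | ∃ h : X → ℝ → ℝ, (∀ x y, |h x y| ≤ Real.log Λ) ∧ μ1h h = m} :=
  partial_identification_general μ Xf Yf Zf π hπ πxy hπxy Λ hsens μ1h hμ1h μ1 hipw hbb hba
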